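/- Let G and H be finite connected simple graphs, fix a root (r_G, r_H) of G□H, fix v ∈ V(H), η ∈ {1, …, π(H)}, and a set S ⊆ V(H)\{v} with η ≤ |S| ≤ π(H) and d := max_{w∈S} dist_H(v,w) ≤ ⌈log₂ π(G)⌉ − 1; set χ := (2^d − 1) + |S| − η. Let c be a pebbling configuration on G□H such that: (i) Σ_{j∈V(H)} ⌊c̃_j / π(G)⌋ ≥ π(H) − η; (ii) c̃_v ≥ χ·|V(G)| + extra_v; and (iii) |V(G)|·(|S| − η) + extra_v ≥ Σ_{w∈S} 2^{dist_H(v,w)}·(π(G) − extra_w). Then c is (r_G, r_H)-solvable. -/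

import Mathlib

open SimpleGraph Finset

/-- A single pebbling move on `G`: remove two pebbles from a vertex `v` with at least two
pebbles and add one pebble to an adjacent vertex `w`. -/
def PebblingMove {V : Type*} (G : SimpleGraph V) (c c' : V → ℕ) : Prop :=
  ∃ v w, G.Adj v w ∧ 2 ≤ c v ∧ c' v = c v - 2 ∧ c' w = c w + 1 ∧
    ∀ u, u ≠ v → u ≠ w → c' u = c u

/-- Some finite sequence of pebbling moves starting from `c` places at least `t` pebbles
on the vertex `r`. -/
def NSolvable {V : Type*} (G : SimpleGraph V) (c : V → ℕ) (r : V) (t : ℕ) : Prop :=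
  ∃ c', Relation.ReflTransGen (PebblingMove G) c c' ∧ t ≤ c' r

/-- A configuration `c` is `r`-solvable. -/
def Solvable {V : Type*} (G : SimpleGraph V) (c : V → ℕ) (r : V) : Prop :=
  NSolvable G c r 1

/-- The pebbling number `π(G)`: least `k` such that every configuration of size `k` is
`r`-solvable for every root `r`. -/
noncomputable def pebblingNumber {V : Type*} (G : SimpleGraph V) [Fintype V] : ℕ :=
  sInf {k | ∀ c : V → ℕ, (∑ v, c v) = k → ∀ r, Solvable G c r}

/-- The 2-pebbling number `π₂(G, s)`: least `m` such that for every root `r`, every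
configuration of size at least `m` with support of size exactly `s` can place two pebbles
on `r`. -/
noncomputable def twoPebblingNumber {V : Type*} (G : SimpleGraph V) [Fintype V] (s : ℕ) : ℕ :=
  sInf {m | ∀ (r : V) (c : V → ℕ), m ≤ ∑ v, c v →
    (Finset.univ.filter fun v => 1 ≤ c v).card = s → NSolvable G c r 2}

/-!
Write `P = π(G)` and `T_j` for the number of pebbles on the slice `G_j`. As long as
`T_v > (2^d - 1)|V(G)|`, some vertex of `G_v` carries `2^d` pebbles, which is enough to send one
pebble along a copy of a shortest `H`-path to any slice `G_w` with `w ∈ S`. By (ii) and (iii) this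
lets `G_v` supply every such slice with the `P - (T_w mod P)` pebbles it lacks to complete one more
`G`-set, while `G_v` itself loses at most `|S| - η` of its `G`-sets; by (i) at least `π(H)` sets
remain in total. Each `G`-set of `G_j` then moves one pebble to `(r_G, j)`, and the `π(H)` pebbles
on the copy of `H` through `r_G` reach `(r_G, r_H)`.
-/

abbrev PebblingReach {V : Type*} (G : SimpleGraph V) : (V → ℕ) → (V → ℕ) → Prop :=
  Relation.ReflTransGen (PebblingMove G)

section Pebbling

variable {V : Type*} {G : SimpleGraph V} {c c' c₀ : V → ℕ} {r : V} {t : ℕ}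

theorem PebblingMove.add_right (h : PebblingMove G c c') (e : V → ℕ) :
    PebblingMove G (c + e) (c' + e) := by
  obtain ⟨x, y, hxy, hx, hcx, hcy, hrest⟩ := h
  refine ⟨x, y, hxy, ?_, ?_, ?_, fun u hux huy => ?_⟩ <;> simp only [Pi.add_apply]
  · omega
  · omega
  · omega
  · rw [hrest u hux huy]

theorem PebblingReach.add_right (h : PebblingReach G c c') (e : V → ℕ) :
    PebblingReach G (c + e) (c' + e) :=
  Relation.ReflTransGen.lift (· + e) (fun _ _ hm => hm.add_right e) _ _ h

theorem PebblingReach.add_left (h : PebblingReach G c c') (e : V → ℕ) :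
    PebblingReach G (e + c) (e + c') := by
  simpa only [add_comm e] using h.add_right e

theorem NSolvable.of_pebblingReach (hc : PebblingReach G c₀ c) (h : NSolvable G c r t) :
    NSolvable G c₀ r t :=
  let ⟨c', hcc', hc'⟩ := h
  ⟨c', hc.trans hcc', hc'⟩

theorem nsolvable_zero (c : V → ℕ) (r : V) : NSolvable G c r 0 :=
  ⟨c, .refl, Nat.zero_le _⟩

theorem NSolvable.add {c₁ c₂ : V → ℕ} {t₁ t₂ : ℕ} (h₁ : NSolvable G c₁ r t₁)
    (h₂ : NSolvable G c₂ r t₂) : NSolvable G (c₁ + c₂) r (t₁ + t₂) := by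
  obtain ⟨c₁', hc₁, ht₁⟩ := h₁
  obtain ⟨c₂', hc₂, ht₂⟩ := h₂
  exact ⟨c₁' + c₂', (PebblingReach.add_right hc₁ c₂).trans (PebblingReach.add_left hc₂ c₁'),
    Nat.add_le_add ht₁ ht₂⟩

theorem NSolvable.mono (h : NSolvable G c r t) (hle : c ≤ c₀) : NSolvable G c₀ r t := by
  simpa only [add_tsub_cancel_of_le hle, add_zero] using h.add (nsolvable_zero (c₀ - c) r)

variable [DecidableEq V]

theorem pebblingMove_of_adj {x y : V} (hxy : G.Adj x y) (hx : 2 ≤ c x) :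
    PebblingMove G c (c - Pi.single x 2 + Pi.single y 1) := by
  refine ⟨x, y, hxy, hx, ?_, ?_, fun u hux huy => ?_⟩ <;>
    simp [hxy.ne, hxy.ne.symm, *]

theorem exists_pebblingReach_of_adj {x y : V} (hxy : G.Adj x y) (m : ℕ) (hc : 2 * m ≤ c x) :
    ∃ c', PebblingReach G c c' ∧ c' + Pi.single x (2 * m) = c + Pi.single y m := by
  induction m generalizing c with
  | zero => exact ⟨c, .refl, by simp⟩
  | succ m ih =>
    set c₁ := c - Pi.single x 2 + Pi.single y 1
    have hc₁x : c₁ x = c x - 2 := by simp [c₁, hxy.ne]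
    obtain ⟨c', hc₁c', hc'⟩ := ih (c := c₁) (by omega)
    refine ⟨c', .head (pebblingMove_of_adj hxy (by omega)) hc₁c', funext fun u => ?_⟩
    have hu := congrFun hc' u
    have hcu : c₁ u + (if u = x then 2 else 0) = c u + (if u = y then 1 else 0) := by
      simp only [c₁, Pi.add_apply, Pi.sub_apply, Pi.single_apply]
      split_ifs <;> subst_vars <;> omega
    simp only [Pi.add_apply, Pi.single_apply] at hu ⊢
    split_ifs at hu hcu ⊢ <;> omega

theorem exists_pebblingReach_of_walk {x y : V} (p : G.Walk x y) (hc : 2 ^ p.length ≤ c x) :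
    ∃ c', PebblingReach G c c' ∧ c' + Pi.single x (2 ^ p.length) = c + Pi.single y 1 := by
  induction p generalizing c with
  | nil => exact ⟨c, .refl, by simp⟩
  | @cons a b y hab q ih =>
    rw [Walk.length_cons, pow_succ'] at hc ⊢
    obtain ⟨c₁, hcc₁, hc₁⟩ := exists_pebblingReach_of_adj hab (2 ^ q.length) hc
    have hc₁b : 2 ^ q.length ≤ c₁ b := by
      have := congrFun hc₁ b
      simp only [Pi.add_apply, Pi.single_eq_same, Pi.single_eq_of_ne hab.ne.symm] at this
      omega
    obtain ⟨c', hc₁c', hc'⟩ := ih hc₁b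
    refine ⟨c', hcc₁.trans hc₁c', funext fun u => ?_⟩
    have h₁ := congrFun hc₁ u
    have h₂ := congrFun hc' u
    simp only [Pi.add_apply, Pi.single_apply] at h₁ h₂ ⊢
    split_ifs at h₁ h₂ ⊢ <;> omega

end Pebbling

section PebblingNumber

variable {V : Type*} {G : SimpleGraph V} {c : V → ℕ}

theorem solvable_of_two_pow_dist_le (hG : G.Connected) {x r : V} (h : 2 ^ G.dist x r ≤ c x) :
    Solvable G c r := by
  classical
  obtain ⟨p, hp⟩ := (hG.preconnected x r).exists_walk_length_eq_dist
  obtain ⟨c', hcc', hc'⟩ := exists_pebblingReach_of_walk p (hp ▸ h)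
  refine ⟨c', hcc', ?_⟩
  have hr := congrFun hc' r
  rcases eq_or_ne x r with rfl | hxr
  · simp only [hp, dist_self, pow_zero, Pi.add_apply, Pi.single_eq_same] at hr h
    omega
  · simp only [Pi.add_apply, Pi.single_eq_same, Pi.single_eq_of_ne' hxr] at hr
    omega

theorem not_solvable_of_le_one {r : V} (hc : ∀ u, c u ≤ 1) (hr : c r = 0) : ¬ Solvable G c r := by
  rintro ⟨c', hcc', hc'⟩
  have hstuck : ∀ c'', ¬ PebblingMove G c c'' := by
    rintro c'' ⟨x, -, -, hx, -⟩
    have := hc x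
    omega
  rw [Relation.reflTransGen_iff_eq hstuck] at hcc'
  subst hcc'
  omega

theorem exists_lt_of_mul_card_lt {ι : Type*} [Fintype ι] {f : ι → ℕ} {m : ℕ}
    (h : m * Fintype.card ι < ∑ i, f i) : ∃ i, m < f i := by
  obtain ⟨i, -, hi⟩ := Finset.exists_lt_of_sum_lt (f := fun _ => m) (s := univ)
    (by simpa [mul_comm] using h)
  exact ⟨i, hi⟩

variable [Fintype V]

theorem exists_le_sum_eq_of_le_sum {m : ℕ} (h : m ≤ ∑ u, c u) :
    ∃ c₁ ≤ c, ∑ u, c₁ u = m := by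
  classical
  induction m with
  | zero => exact ⟨0, fun _ => Nat.zero_le _, by simp⟩
  | succ m ih =>
    obtain ⟨c₁, hc₁, hsum⟩ := ih (by omega)
    obtain ⟨u, -, hu⟩ := Finset.exists_lt_of_sum_lt (s := univ) (hsum ▸ h : ∑ u, c₁ u < ∑ u, c u)
    refine ⟨c₁ + Pi.single u 1, fun w => ?_, by simp [sum_add_distrib, hsum]⟩
    rcases eq_or_ne w u with rfl | hwu
    · simpa using hu
    · simpa [hwu] using hc₁ w

theorem solvable_of_sum_eq_pebblingNumber (hG : G.Connected) (h : ∑ u, c u = pebblingNumber G)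
    (r : V) : Solvable G c r := by
  have : Nonempty V := hG.nonempty
  -- by pigeonhole, `(2 ^ diam - 1) * |V| + 1` pebbles put `2 ^ diam` pebbles on some vertex
  have hne : {k | ∀ c : V → ℕ, ∑ v, c v = k → ∀ r, Solvable G c r}.Nonempty := by
    refine ⟨(2 ^ G.diam - 1) * Fintype.card V + 1, fun c hc r => ?_⟩
    obtain ⟨x, hx⟩ := exists_lt_of_mul_card_lt (f := c) (m := 2 ^ G.diam - 1) (by omega)
    refine solvable_of_two_pow_dist_le hG (x := x) (le_trans ?_ (Nat.le_of_pred_lt hx))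
    exact Nat.pow_le_pow_right two_pos (dist_le_diam (connected_iff_ediam_ne_top.mp hG))
  exact Nat.sInf_mem hne c h r

theorem solvable_of_pebblingNumber_le (hG : G.Connected) (h : pebblingNumber G ≤ ∑ u, c u)
    (r : V) : Solvable G c r := by
  obtain ⟨c₁, hc₁, hsum⟩ := exists_le_sum_eq_of_le_sum h
  exact (solvable_of_sum_eq_pebblingNumber hG hsum r).mono hc₁

theorem card_le_pebblingNumber (hG : G.Connected) : Fintype.card V ≤ pebblingNumber G := by
  classical
  obtain ⟨r⟩ := hG.nonempty
  by_contra! hlt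
  have hsum : ∑ u, (if u = r then 0 else 1) = Fintype.card V - 1 := by
    simp [Finset.sum_ite, Finset.filter_ne']
  exact not_solvable_of_le_one (c := fun u => if u = r then 0 else 1)
    (fun u => by split_ifs <;> omega) (if_pos rfl) (solvable_of_pebblingNumber_le hG (by omega) r)

theorem nsolvable_of_mul_pebblingNumber_le (hG : G.Connected) {k : ℕ}
    (h : k * pebblingNumber G ≤ ∑ u, c u) (r : V) : NSolvable G c r k := by
  induction k generalizing c with
  | zero => exact nsolvable_zero c r
  | succ k ih =>
    obtain ⟨c₁, hc₁, hsum⟩ := exists_le_sum_eq_of_le_sum (m := pebblingNumber G)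
      (le_trans (Nat.le_mul_of_pos_left _ k.succ_pos) h)
    have hrest : k * pebblingNumber G ≤ ∑ u, (c - c₁) u := by
      rw [Pi.sub_def, Finset.sum_tsub_distrib _ fun u _ => hc₁ u, hsum]
      rw [Nat.succ_mul] at h
      omega
    have := (solvable_of_sum_eq_pebblingNumber hG hsum r).add (ih hrest)
    rwa [add_tsub_cancel_of_le hc₁, add_comm] at this

end PebblingNumber

theorem Function.extend_comp_self {α β γ : Sort*} (f : α → β) (g : β → γ) :
    Function.extend f (g ∘ f) g = g := by
  classical
  funext b
  by_cases hb : ∃ a, f a = b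
  · simp [Function.extend_def, hb, Classical.choose_spec hb]
  · exact Function.extend_apply' _ _ _ hb

section Embedding

variable {V W : Type*} {G : SimpleGraph V} {G' : SimpleGraph W} (f : G ↪g G')

theorem PebblingMove.extend {c c' : V → ℕ} (h : PebblingMove G c c') (e : W → ℕ) :
    PebblingMove G' (Function.extend f c e) (Function.extend f c' e) := by
  obtain ⟨x, y, hxy, hx, hcx, hcy, hrest⟩ := h
  have hf := f.injective
  refine ⟨f x, f y, f.map_adj_iff.mpr hxy, ?_, ?_, ?_, fun u hux huy => ?_⟩
  · simpa only [hf.extend_apply] using hx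
  · simpa only [hf.extend_apply] using hcx
  · simpa only [hf.extend_apply] using hcy
  · by_cases hu : ∃ a, f a = u
    · obtain ⟨a, rfl⟩ := hu
      simp only [hf.extend_apply]
      exact hrest a (ne_of_apply_ne f hux) (ne_of_apply_ne f huy)
    · simp only [Function.extend_apply' _ _ _ hu]

theorem PebblingReach.extend {c c' : V → ℕ} (h : PebblingReach G c c') (e : W → ℕ) :
    PebblingReach G' (Function.extend f c e) (Function.extend f c' e) :=
  Relation.ReflTransGen.lift (Function.extend f · e) (fun _ _ hm => hm.extend f e) _ _ h

theorem NSolvable.of_comp {c : W → ℕ} {r : V} {t : ℕ} (h : NSolvable G (c ∘ f) r t) :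
    NSolvable G' c (f r) t := by
  obtain ⟨c', hcc', hc'⟩ := h
  refine ⟨Function.extend f c' c, ?_, by rwa [f.injective.extend_apply]⟩
  simpa only [Function.extend_comp_self] using PebblingReach.extend f hcc' c

end Embedding

section BoxProd

variable {α β : Type*} {G : SimpleGraph α} {H : SimpleGraph β}

theorem extend_boxProdLeft_apply {γ : Type*} [DecidableEq β] (j : β) (g : α → γ) (e : α × β → γ)
    (p : α × β) : Function.extend (G.boxProdLeft H j) g e p = if p.2 = j then g p.1 else e p := by
  split_ifs with hp
  · obtain ⟨i, j'⟩ := p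
    obtain rfl : j' = j := hp
    exact (G.boxProdLeft H _).injective.extend_apply g e i
  · exact Function.extend_apply' _ _ _ fun ⟨i, hi⟩ => hp (by rw [← hi]; rfl)

theorem PebblingReach.boxProd_of_slices [Fintype β] {X : α × β → ℕ} {Y : β → α → ℕ}
    (h : ∀ j, PebblingReach G (fun i => X (i, j)) (Y j)) :
    PebblingReach (G □ H) X (fun p => Y p.2 p.1) := by
  classical
  suffices ∀ T : Finset β,
      PebblingReach (G □ H) X (fun p => if p.2 ∈ T then Y p.2 p.1 else X p) by
    simpa using this univ
  intro T
  induction T using Finset.induction_on with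
  | empty => simpa using .refl
  | insert j T hj ih =>
    refine ih.trans ?_
    convert (h j).extend (G.boxProdLeft H j) (fun p => if p.2 ∈ T then Y p.2 p.1 else X p)
      using 1 <;> funext ⟨i, j'⟩ <;> simp only [extend_boxProdLeft_apply] <;> split_ifs <;>
      simp_all

variable [Fintype α]

def sliceSum (X : α × β → ℕ) (j : β) : ℕ := ∑ i, X (i, j)

theorem exists_pebblingReach_boxProd_div_sliceSum_le [Fintype β] (hG : G.Connected) (r : α)
    (X : α × β → ℕ) :
    ∃ Y, PebblingReach (G □ H) X Y ∧ ∀ j, sliceSum X j / pebblingNumber G ≤ Y (r, j) := by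
  have hslice (j : β) : NSolvable G (fun i => X (i, j)) r (sliceSum X j / pebblingNumber G) :=
    nsolvable_of_mul_pebblingNumber_le hG (Nat.div_mul_le_self _ _) r
  choose Y hXY hY using hslice
  exact ⟨_, PebblingReach.boxProd_of_slices hXY, hY⟩

end BoxProd

section Delivery

variable {α β : Type*} [Fintype α] [DecidableEq α] [DecidableEq β]
  {G : SimpleGraph α} {H : SimpleGraph β} {X : α × β → ℕ} {v w : β}

theorem exists_pebblingReach_boxProd_sliceSum (hH : H.Connected) {i₀ : α}
    (h : 2 ^ H.dist v w ≤ X (i₀, v)) :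
    ∃ Y, PebblingReach (G □ H) X Y ∧
      sliceSum Y + Pi.single v (2 ^ H.dist v w) = sliceSum X + Pi.single w 1 := by
  obtain ⟨p, hp⟩ := (hH.preconnected v w).exists_walk_length_eq_dist
  have hlen : (p.boxProdRight G i₀).length = H.dist v w := (Walk.length_map _ p).trans hp
  obtain ⟨Y, hXY, hY⟩ := exists_pebblingReach_of_walk (p.boxProdRight G i₀) (hlen ▸ h)
  refine ⟨Y, hXY, funext fun j => ?_⟩
  have := congrArg (fun Z => ∑ i, Z (i, j)) hY
  simp only [hlen, Pi.add_apply, sum_add_distrib, Pi.single_apply, Prod.mk.injEq] at this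
  simpa [sliceSum, Pi.single_apply, ite_and] using this

theorem exists_pebblingReach_boxProd_sliceSum_mul (hH : H.Connected) (k : ℕ)
    (h : 2 ^ H.dist v w * k + (2 ^ H.dist v w - 1) * Fintype.card α ≤ sliceSum X v) :
    ∃ Y, PebblingReach (G □ H) X Y ∧
      sliceSum Y + Pi.single v (2 ^ H.dist v w * k) = sliceSum X + Pi.single w k := by
  induction k generalizing X with
  | zero => exact ⟨X, .refl, by simp⟩
  | succ k ih =>
    rw [Nat.mul_succ] at h ⊢
    obtain ⟨i₀, hi₀⟩ := exists_lt_of_mul_card_lt (f := fun i => X (i, v)) (m := 2 ^ H.dist v w - 1)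
      (by unfold sliceSum at h; have := Nat.one_le_two_pow (n := H.dist v w); omega)
    obtain ⟨Y₁, hXY₁, hY₁⟩ := exists_pebblingReach_boxProd_sliceSum (G := G) hH
      (Nat.le_of_pred_lt hi₀)
    have hY₁v := congrFun hY₁ v
    simp only [Pi.add_apply, Pi.single_eq_same, Pi.single_apply] at hY₁v
    obtain ⟨Y, hY₁Y, hY⟩ := ih (X := Y₁) (by split_ifs at hY₁v <;> omega)
    refine ⟨Y, hXY₁.trans hY₁Y, ?_⟩
    calc sliceSum Y + Pi.single v (2 ^ H.dist v w * k + 2 ^ H.dist v w)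
        = (sliceSum Y + Pi.single v (2 ^ H.dist v w * k)) + Pi.single v (2 ^ H.dist v w) := by
          rw [Pi.single_add, add_assoc]
      _ = (sliceSum Y₁ + Pi.single v (2 ^ H.dist v w)) + Pi.single w k := by
          rw [hY]; abel
      _ = sliceSum X + Pi.single w (k + 1) := by
          rw [hY₁, Pi.single_add]; abel

theorem exists_pebblingReach_boxProd_sliceSum_finset (hH : H.Connected) {d : ℕ} (S : Finset β)
    (hd : ∀ w ∈ S, H.dist v w ≤ d) (k : β → ℕ)
    (h : ∑ w ∈ S, 2 ^ H.dist v w * k w + (2 ^ d - 1) * Fintype.card α ≤ sliceSum X v) :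
    ∃ Y, PebblingReach (G □ H) X Y ∧
      sliceSum Y + Pi.single v (∑ w ∈ S, 2 ^ H.dist v w * k w) =
        sliceSum X + ∑ w ∈ S, Pi.single w (k w) := by
  induction S using Finset.induction_on generalizing X with
  | empty => exact ⟨X, .refl, by simp⟩
  | insert w S hw ih =>
    rw [sum_insert hw] at h
    rw [sum_insert hw, sum_insert hw]
    obtain ⟨Y₁, hXY₁, hY₁⟩ := ih (X := X) (fun w' hw' => hd w' (mem_insert_of_mem hw'))
      (by omega)
    have hY₁v := congrFun hY₁ v
    simp only [Pi.add_apply, Pi.single_eq_same, Finset.sum_apply, Finset.sum_pi_single] at hY₁v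
    have hpow : 2 ^ H.dist v w - 1 ≤ 2 ^ d - 1 :=
      Nat.sub_le_sub_right (Nat.pow_le_pow_right two_pos (hd w (mem_insert_self w S))) 1
    obtain ⟨Y, hY₁Y, hY⟩ := exists_pebblingReach_boxProd_sliceSum_mul (G := G) (X := Y₁)
      (v := v) (w := w) hH (k w) (by have := Nat.mul_le_mul_right (Fintype.card α) hpow; omega)
    refine ⟨Y, hXY₁.trans hY₁Y, ?_⟩
    calc sliceSum Y + Pi.single v (2 ^ H.dist v w * k w + ∑ w ∈ S, 2 ^ H.dist v w * k w)
        = (sliceSum Y + Pi.single v (2 ^ H.dist v w * k w))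
            + Pi.single v (∑ w ∈ S, 2 ^ H.dist v w * k w) := by
          rw [Pi.single_add, add_assoc]
      _ = (sliceSum Y₁ + Pi.single v (∑ w ∈ S, 2 ^ H.dist v w * k w)) + Pi.single w (k w) := by
          rw [hY]; abel
      _ = sliceSum X + (Pi.single w (k w) + ∑ w ∈ S, Pi.single w (k w)) := by
          rw [hY₁]; abel

end Delivery

theorem add_sub_mod_div_eq_div_add_one {P : ℕ} (hP : 0 < P) (T : ℕ) :
    (T + (P - T % P)) / P = T / P + 1 := by
  have h₁ := Nat.div_add_mod' T P
  have h₂ := Nat.mod_lt T hP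
  rw [show T + (P - T % P) = (T / P + 1) * P by rw [add_mul, one_mul]; omega]
  exact Nat.mul_div_cancel _ hP

theorem div_le_div_add_of_le_add {T T' P s : ℕ} (h : T ≤ T' + (s * P + T % P)) :
    T / P ≤ T' / P + s := by
  rcases Nat.eq_zero_or_pos P with rfl | hP
  · simp
  have := Nat.div_add_mod' T P
  have : T / P - s ≤ T' / P := (Nat.le_div_iff_mul_le hP).2 (by rw [Nat.sub_mul]; omega)
  omega

theorem sum_add_card_le_sum_add {ι : Type*} [Fintype ι] [DecidableEq ι] {f g : ι → ℕ}
    {S : Finset ι} {v : ι} {s : ℕ} (hvS : v ∉ S) (hS : ∀ j ∈ S, f j + 1 ≤ g j)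
    (hv : f v ≤ g v + s) (hle : ∀ j ∉ S, j ≠ v → f j ≤ g j) :
    ∑ j, f j + S.card ≤ ∑ j, g j + s := by
  have key : ∑ j, (f j + if j ∈ S then 1 else 0) ≤ ∑ j, (g j + if j = v then s else 0) := by
    refine sum_le_sum fun j _ => ?_
    by_cases hj : j ∈ S
    · simpa [hj, ne_of_mem_of_not_mem hj hvS] using hS j hj
    · by_cases hjv : j = v
      · subst hjv
        simpa [hj] using hv
      · simpa [hj, hjv] using hle j hj hjv
  simpa [sum_add_distrib] using key

theorem sum_div_add_card_le_sum_div_add {ι : Type*} [Fintype ι] [DecidableEq ι] {T T' : ι → ℕ}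
    {P C s : ℕ} (hP : 0 < P) {S : Finset ι} {v : ι} (hvS : v ∉ S)
    (hT : T' + Pi.single v C = T + ∑ w ∈ S, Pi.single w (P - T w % P))
    (hC : C ≤ s * P + T v % P) :
    ∑ j, T j / P + S.card ≤ ∑ j, T' j / P + s := by
  have hTj (j : ι) := congrFun hT j
  simp only [Pi.add_apply, Finset.sum_apply, sum_pi_single] at hTj
  simp only [Pi.single_apply] at hTj
  refine sum_add_card_le_sum_add (f := fun j => T j / P) (g := fun j => T' j / P) hvS
    (fun j hj => ?_) ?_ (fun j hj hjv => ?_)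
  · have := hTj j
    simp only [hj, ne_of_mem_of_not_mem hj hvS, if_true, if_false, add_zero] at this
    rw [this, add_sub_mod_div_eq_div_add_one hP]
  · have := hTj v
    simp only [hvS, if_true, if_false, add_zero] at this
    exact div_le_div_add_of_le_add (by omega)
  · have := hTj j
    simp only [hj, hjv, if_false, add_zero] at this
    rw [this]

theorem stmt3_general {α β : Type*} [Fintype α] [Fintype β]
    (G : SimpleGraph α) (H : SimpleGraph β) (hG : G.Connected) (hH : H.Connected)
    (c : α × β → ℕ) (rG : α) (rH : β)
    (v : β) (η : ℕ)
    (S : Finset β) (hvS : v ∉ S) (hcard1 : η ≤ S.card)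
    (d : ℕ) (hdmax : d = S.sup fun w => H.dist v w)
    -- (i) the total G-set count is at least π(H) - η
    (hsets : pebblingNumber H - η ≤ ∑ j : β, (∑ i : α, c (i, j)) / pebblingNumber G)
    -- (ii) slice G_v is χ-saturated, χ = (2^d - 1) + |S| - η
    (hsat : ((2 ^ d - 1) + S.card - η) * Fintype.card α
        + (∑ i : α, c (i, v)) % pebblingNumber G ≤ ∑ i : α, c (i, v))
    -- (iii) enough pebbles are available at G_v to complete a set at each slice in S
    (havail : ∑ w ∈ S, 2 ^ (H.dist v w) *
          (pebblingNumber G - (∑ i : α, c (i, w)) % pebblingNumber G)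
        ≤ Fintype.card α * (S.card - η) + (∑ i : α, c (i, v)) % pebblingNumber G) :
    Solvable (G.boxProd H) c (rG, rH) := by
  classical
  set P := pebblingNumber G
  have hnP : Fintype.card α ≤ P := card_le_pebblingNumber hG
  have hP : 0 < P := (Fintype.card_pos_iff.2 hG.nonempty).trans_le hnP
  have havail' : ∑ w ∈ S, 2 ^ H.dist v w * (P - sliceSum c w % P)
      ≤ (S.card - η) * Fintype.card α + sliceSum c v % P := by
    rw [mul_comm]; exact havail
  have hcost : ∑ w ∈ S, 2 ^ H.dist v w * (P - sliceSum c w % P)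
      ≤ (S.card - η) * P + sliceSum c v % P :=
    havail'.trans (Nat.add_le_add_right (Nat.mul_le_mul_left _ hnP) _)
  have hsat' : (2 ^ d - 1) * Fintype.card α + (S.card - η) * Fintype.card α + sliceSum c v % P
      ≤ sliceSum c v := by
    rwa [Nat.add_sub_assoc hcard1, add_mul] at hsat
  obtain ⟨X, hcX, hX⟩ := exists_pebblingReach_boxProd_sliceSum_finset (G := G) (X := c) hH S
    (fun w hw => hdmax ▸ le_sup (f := fun w => H.dist v w) hw) (fun w => P - sliceSum c w % P)
    (by omega)
  have hcount := sum_div_add_card_le_sum_div_add hP hvS hX hcost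
  obtain ⟨Y, hXY, hY⟩ := exists_pebblingReach_boxProd_div_sliceSum_le hG rG X
  have hsize : pebblingNumber H ≤ ∑ j, Y (rG, j) :=
    calc pebblingNumber H ≤ ∑ j, sliceSum X j / P := by
          have : pebblingNumber H - η ≤ ∑ j, sliceSum c j / P := hsets
          omega
      _ ≤ ∑ j, Y (rG, j) := sum_le_sum fun j _ => hY j
  exact (NSolvable.of_comp (G.boxProdRight H rG)
    (solvable_of_pebblingNumber_le hH hsize rH)).of_pebblingReach (hcX.trans hXY)

/-- constraint A.2(K, v, η, S) is valid: if the total `G`-set count is at least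
`π(H) - η`, the slice `G_v` is `χ`-saturated with `χ = (2^d - 1) + |S| - η`, and enough
pebbles are available at `G_v` to complete a set at each slice indexed by `S`, then the
configuration is solvable. -/
theorem stmt3 {α β : Type*} [Fintype α] [Fintype β]
    (G : SimpleGraph α) (H : SimpleGraph β) (hG : G.Connected) (hH : H.Connected)
    (c : α × β → ℕ) (rG : α) (rH : β)
    (v : β) (η : ℕ) (hη1 : 1 ≤ η) (hη2 : η ≤ pebblingNumber H)
    (S : Finset β) (hvS : v ∉ S) (hcard1 : η ≤ S.card) (hcard2 : S.card ≤ pebblingNumber H)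
    (d : ℕ) (hdmax : d = S.sup fun w => H.dist v w)
    (hdlog : d ≤ Nat.clog 2 (pebblingNumber G) - 1)
    -- (i) the total G-set count is at least π(H) - η
    (hsets : pebblingNumber H - η ≤ ∑ j : β, (∑ i : α, c (i, j)) / pebblingNumber G)
    -- (ii) slice G_v is χ-saturated, χ = (2^d - 1) + |S| - η
    (hsat : ((2 ^ d - 1) + S.card - η) * Fintype.card α
        + (∑ i : α, c (i, v)) % pebblingNumber G ≤ ∑ i : α, c (i, v))
    -- (iii) enough pebbles are available at G_v to complete a set at each slice in S
    (havail : ∑ w ∈ S, 2 ^ (H.dist v w) *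
          (pebblingNumber G - (∑ i : α, c (i, w)) % pebblingNumber G)
        ≤ Fintype.card α * (S.card - η) + (∑ i : α, c (i, v)) % pebblingNumber G) :
    Solvable (G.boxProd H) c (rG, rH) :=
  stmt3_general G H hG hH c rG rH v η S hvS hcard1 d hdmax hsets hsat havail
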